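/- Let A₁ ∈ ℂⁿ¹ˣⁿ¹, A₂ ∈ ℂⁿ²ˣⁿ², b₁ ∈ ℂⁿ¹, b₂ ∈ ℂⁿ². Suppose (A₁, b₁) and (A₂, b₂) are each controllable and A₁ and A₂ have no common eigenvalues. Then the pair (diag(A₁, A₂), (b₁ᵀ, b₂ᵀ)ᵀ) is controllable. -/

import Mathlib

open Polynomial


open Matrix

lemma rank_eq_card_iff_vecMul {ι κ : Type} [Fintype ι] [Fintype κ] [DecidableEq ι]
    (M : Matrix ι κ ℂ) :
    M.rank = Fintype.card ι ↔ ∀ x : ι → ℂ, M.vecMul x = 0 → x = 0 := by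
  rw [← Matrix.rank_transpose]
  unfold Matrix.rank
  constructor
  · intro h x hx
    have := Mᵀ.mulVecLin.finrank_range_add_finrank_ker
    rw [h] at this
    simp [Module.finrank_pi] at this
    have hk : x ∈ LinearMap.ker M.vecMulLinear := by
      simp [LinearMap.mem_ker, hx]
    rw [this] at hk
    simpa using hk
  · intro h
    have hker : LinearMap.ker Mᵀ.mulVecLin = ⊥ := by
      rw [Submodule.eq_bot_iff]
      intro x hx
      exact h x (by simpa [Matrix.mulVec_transpose] using hx)
    have := Mᵀ.mulVecLin.finrank_range_add_finrank_ker
    rw [hker] at this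
    simpa [Module.finrank_pi] using this

lemma dot_krylov_all {ι : Type} [Fintype ι] [DecidableEq ι]
    (A : Matrix ι ι ℂ) (b x : ι → ℂ)
    (h : ∀ j < Fintype.card ι, x ⬝ᵥ (A ^ j).mulVec b = 0) :
    ∀ j : ℕ, x ⬝ᵥ (A ^ j).mulVec b = 0 := by
  set N := Fintype.card ι with hN
  intro j
  induction j using Nat.strong_induction_on with
  | _ j ih =>
    rcases lt_or_ge j N with hj | hj
    · exact h j hj
    · -- j ≥ N, use Cayley–Hamilton
      rcases Nat.exists_eq_add_of_le hj with ⟨m, rfl⟩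
      rcases Nat.eq_zero_or_pos N with h0 | hpos
      · -- ι is empty, dot product is 0
        have : IsEmpty ι := Fintype.card_eq_zero_iff.mp h0
        simp [dotProduct]
      set p : Polynomial ℂ := A.charpoly with hp
      have hmonic : p.Monic := A.charpoly_monic
      have hdeg : p.natDegree = N := A.charpoly_natDegree_eq_dim
      set q : Polynomial ℂ := Polynomial.X ^ N - p with hq
      have hdegd : p.degree = (N : WithBot ℕ) := by
        rw [Polynomial.degree_eq_natDegree hmonic.ne_zero, hdeg]
      have hqdeg : q.natDegree < N := by
        rcases eq_or_ne q 0 with h0' | h0'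
        · simpa [h0'] using hpos
        rw [Polynomial.natDegree_lt_iff_degree_lt h0']
        have := Polynomial.degree_sub_lt (p := Polynomial.X ^ N) (q := p) ?_ ?_ ?_
        · simpa [hq] using this
        · rw [Polynomial.degree_X_pow, hdegd]
        · exact pow_ne_zero N Polynomial.X_ne_zero
        · simp [Polynomial.leadingCoeff_X_pow, hmonic.leadingCoeff]
      have hCH : (A : Matrix ι ι ℂ) ^ N = Polynomial.aeval A q := by
        have := A.aeval_self_charpoly
        rw [hq]
        simp [hp, this]
      have hsum : Polynomial.aeval A q = ∑ i ∈ Finset.range N, q.coeff i • A ^ i :=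
        Polynomial.aeval_eq_sum_range' hqdeg A
      have hAj : A ^ (N + m) = ∑ i ∈ Finset.range N, q.coeff i • (A ^ (m + i)) := by
        rw [add_comm N m, pow_add, hCH, hsum, Finset.mul_sum]
        congr 1; funext i
        rw [mul_smul_comm, ← pow_add]
      let φ : Matrix ι ι ℂ →ₗ[ℂ] ℂ :=
        { toFun := fun M => x ⬝ᵥ M.mulVec b
          map_add' := by intro M₁ M₂; simp [Matrix.add_mulVec, dotProduct_add]
          map_smul' := by intro c M; simp [Matrix.smul_mulVec]
        }
      show φ (A ^ (N + m)) = 0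
      rw [hAj, map_sum]
      refine Finset.sum_eq_zero fun i hi => ?_
      have h1 : φ (q.coeff i • A ^ (m + i)) = q.coeff i • φ (A ^ (m + i)) := φ.map_smul _ _
      have h2 : φ (A ^ (m + i)) = 0 := ih (m + i) (by have := Finset.mem_range.mp hi; omega)
      rw [h1, h2, smul_zero]

lemma left_to_right_eig {ι : Type} [Fintype ι] [DecidableEq ι]
    (A : Matrix ι ι ℂ) (μ : ℂ) (x : ι → ℂ) (hx : x ≠ 0) (hev : A.vecMul x = μ • x) :
    ∃ w : ι → ℂ, w ≠ 0 ∧ A.mulVec w = μ • w := by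
  have hdetT : (Aᵀ - μ • 1).det = 0 := by
    rw [← Matrix.exists_mulVec_eq_zero_iff]
    refine ⟨x, hx, ?_⟩
    rw [Matrix.sub_mulVec, Matrix.mulVec_transpose, hev, Matrix.smul_mulVec,
      Matrix.one_mulVec, sub_self]
  have hdet : (A - μ • 1).det = 0 := by
    rw [← Matrix.det_transpose]
    simpa [Matrix.transpose_sub, Matrix.transpose_smul] using hdetT
  obtain ⟨w, hw0, hw⟩ := (Matrix.exists_mulVec_eq_zero_iff).mpr hdet
  refine ⟨w, hw0, ?_⟩
  have := hw
  rw [Matrix.sub_mulVec, Matrix.smul_mulVec, Matrix.one_mulVec, sub_eq_zero] at this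
  exact this

lemma fromBlocks_pow {ι κ : Type} [Fintype ι] [Fintype κ] [DecidableEq ι] [DecidableEq κ]
    (A₁ : Matrix ι ι ℂ) (A₂ : Matrix κ κ ℂ) (j : ℕ) :
    (Matrix.fromBlocks A₁ 0 0 A₂) ^ j = Matrix.fromBlocks (A₁ ^ j) 0 0 (A₂ ^ j) := by
  induction j with
  | zero => simp [Matrix.fromBlocks_one]
  | succ j ih => rw [pow_succ, pow_succ, pow_succ, ih, Matrix.fromBlocks_multiply]; simp

/-- `(A, b)` is controllable: the Krylov matrix `[b, Ab, …, Aᵏ⁻¹b]` has rank `k`,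
where the index type of the matrix has cardinality `k`. -/
def ControllableVec {ι : Type} [Fintype ι] [DecidableEq ι]
    (A : Matrix ι ι ℂ) (b : ι → ℂ) : Prop :=
  (Matrix.of fun (i : ι) (j : Fin (Fintype.card ι)) => ((A ^ (j : ℕ)).mulVec b) i).rank =
    Fintype.card ι

theorem stmt_9 (n₁ n₂ : ℕ) (A₁ : Matrix (Fin n₁) (Fin n₁) ℂ) (A₂ : Matrix (Fin n₂) (Fin n₂) ℂ)
    (b₁ : Fin n₁ → ℂ) (b₂ : Fin n₂ → ℂ)
    (h₁ : ControllableVec A₁ b₁) (h₂ : ControllableVec A₂ b₂)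
    (hspec : ∀ μ : ℂ, ¬((∃ v : Fin n₁ → ℂ, v ≠ 0 ∧ A₁.mulVec v = μ • v) ∧
        (∃ w : Fin n₂ → ℂ, w ≠ 0 ∧ A₂.mulVec w = μ • w))) :
    ControllableVec (Matrix.fromBlocks A₁ 0 0 A₂) (Sum.elim b₁ b₂) := by
  classical
  set A := Matrix.fromBlocks A₁ 0 0 A₂ with hA
  set b := Sum.elim b₁ b₂ with hb
  unfold ControllableVec at h₁ h₂ ⊢
  rw [rank_eq_card_iff_vecMul] at h₁ h₂ ⊢
  intro x hx
  by_contra hx0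
  have hlt : ∀ j < Fintype.card (Fin n₁ ⊕ Fin n₂), x ⬝ᵥ (A ^ j).mulVec b = 0 := by
    intro j hj
    simpa [Matrix.vecMul, dotProduct] using congrFun hx ⟨j, hj⟩
  have hall := dot_krylov_all A b x hlt
  let W : Submodule ℂ ((Fin n₁ ⊕ Fin n₂) → ℂ) :=
    { carrier := {y | ∀ j : ℕ, y ⬝ᵥ (A ^ j).mulVec b = 0}
      add_mem' := by intro y z hy hz j; simp [add_dotProduct, hy j, hz j]
      zero_mem' := by intro j; simp
      smul_mem' := by intro c y hy j; simp [smul_dotProduct, hy j] }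
  have hxW : x ∈ W := hall
  haveI : Nontrivial W :=
    ⟨⟨x, hxW⟩, 0, by simp [Subtype.ext_iff, hx0]⟩
  have hinv : ∀ y ∈ W, A.vecMulLinear y ∈ W := by
    intro y hy j
    show (A.vecMul y) ⬝ᵥ (A ^ j).mulVec b = 0
    rw [← Matrix.dotProduct_mulVec, Matrix.mulVec_mulVec, ← pow_succ']
    exact hy (j + 1)
  let f : Module.End ℂ W := (Matrix.vecMulLinear A).restrict hinv
  obtain ⟨μ, hμ⟩ := Module.End.exists_eigenvalue f
  obtain ⟨v, hv⟩ := hμ.exists_hasEigenvector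
  have hvne : (v : (Fin n₁ ⊕ Fin n₂) → ℂ) ≠ 0 := by
    intro h
    exact hv.right (Subtype.ext h)
  have hfv : A.vecMul (v : (Fin n₁ ⊕ Fin n₂) → ℂ) = μ • (v : (Fin n₁ ⊕ Fin n₂) → ℂ) := by
    have h1 := hv.apply_eq_smul
    have h2 := congrArg Subtype.val h1
    simpa [f, LinearMap.restrict_apply] using h2
  set y₁ : Fin n₁ → ℂ := fun i => (v : (Fin n₁ ⊕ Fin n₂) → ℂ) (Sum.inl i) with hy₁
  set y₂ : Fin n₂ → ℂ := fun i => (v : (Fin n₁ ⊕ Fin n₂) → ℂ) (Sum.inr i) with hy₂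
  have hy : (v : (Fin n₁ ⊕ Fin n₂) → ℂ) = Sum.elim y₁ y₂ := by
    funext s; cases s <;> rfl
  have he1 : A₁.vecMul y₁ = μ • y₁ := by
    funext i
    have := congrFun (hy ▸ hfv) (Sum.inl i)
    simpa [hA, Matrix.vecMul_fromBlocks] using this
  have he2 : A₂.vecMul y₂ = μ • y₂ := by
    funext i
    have := congrFun (hy ▸ hfv) (Sum.inr i)
    simpa [hA, Matrix.vecMul_fromBlocks] using this
  have horth : ∀ j : ℕ, y₁ ⬝ᵥ (A₁ ^ j).mulVec b₁ + y₂ ⬝ᵥ (A₂ ^ j).mulVec b₂ = 0 := by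
    intro j
    have hvW := v.2 j
    rw [hy, hA, fromBlocks_pow, hb, Matrix.fromBlocks_mulVec] at hvW
    simpa [sumElim_dotProduct_sumElim] using hvW
  by_cases hc1 : y₁ = 0
  · by_cases hc2 : y₂ = 0
    · exact hvne (by rw [hy, hc1, hc2]; funext s; cases s <;> rfl)
    · refine hc2 (h₂ y₂ ?_)
      funext j
      have := horth (j : ℕ)
      rw [hc1] at this
      simpa [Matrix.vecMul, dotProduct] using this
  · by_cases hc2 : y₂ = 0
    · refine hc1 (h₁ y₁ ?_)
      funext j
      have := horth (j : ℕ)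
      rw [hc2] at this
      simpa [Matrix.vecMul, dotProduct] using this
    · obtain ⟨w1, hw1, hew1⟩ := left_to_right_eig A₁ μ y₁ hc1 he1
      obtain ⟨w2, hw2, hew2⟩ := left_to_right_eig A₂ μ y₂ hc2 he2
      exact hspec μ ⟨⟨w1, hw1, hew1⟩, ⟨w2, hw2, hew2⟩⟩
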